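/- Let π_n = N(x_n, C_n) be a Gaussian measure on ℝ^d with mean x_n ∈ ℝ^d and symmetric positive definite covariance C_n ∈ ℝ^{d×d}, and let P_n(x) = N(x_n + √(1−s²)(x − x_n), s² C_n) with s ∈ (0, 1] be the modified preconditioned Crank–Nicolson proposal. Then the π_n-reversible Metropolis–Hastings transition kernel K_n with proposal P_n satisfies K_n = (T_n)_*K with T_n(x) := x_n + C_n^{1/2} x, where K is the Metropolis–Hastings transition kernel targeting the standard Gaussian π = N(0, I_d) with pCN proposal kernel P(x) = N(√(1−s²) x, s² I_d). -/

import Mathlib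

open MeasureTheory ProbabilityTheory Matrix
open scoped ENNReal NNReal

open scoped ComplexOrder in
/-- The positive semidefinite square root of a positive semidefinite matrix (the definition
`Matrix.PosSemidef.sqrt` of the older Mathlib, which has since been removed). -/
noncomputable def Matrix.PosSemidef.sqrt {n 𝕜 : Type*} [Fintype n] [RCLike 𝕜] [DecidableEq n]
    {A : Matrix n n 𝕜} (hA : A.PosSemidef) : Matrix n n 𝕜 :=
  (hA.1.eigenvectorUnitary : Matrix n n 𝕜) * diagonal (((↑) : ℝ → 𝕜) ∘ (√·) ∘ hA.1.eigenvalues) *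
    (star hA.1.eigenvectorUnitary : Matrix n n 𝕜)

/-- The standard Gaussian measure `N(0, I_d)` on `ℝ^d`. -/
noncomputable def stdGaussian (d : ℕ) : Measure (Fin d → ℝ) :=
  Measure.pi fun _ => gaussianReal 0 1

instance (d : ℕ) : IsProbabilityMeasure (stdGaussian d) := by
  unfold _root_.stdGaussian; infer_instance

/-- The Gaussian measure `N(m, C)` on `ℝ^d`, realized as the pushforward of the standard
Gaussian under `x ↦ m + C^{1/2} x` for positive semidefinite `C` (junk value otherwise). -/
noncomputable def gaussian {d : ℕ} (m : Fin d → ℝ) (C : Matrix (Fin d) (Fin d) ℝ) :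
    Measure (Fin d → ℝ) :=
  letI := Classical.propDecidable C.PosSemidef
  if hC : C.PosSemidef then (stdGaussian d).map (fun x => m + hC.sqrt *ᵥ x)
  else Measure.dirac m

instance {d : ℕ} (m : Fin d → ℝ) (C : Matrix (Fin d) (Fin d) ℝ) :
    IsProbabilityMeasure (gaussian m C) := by
  unfold gaussian
  split
  · exact Measure.isProbabilityMeasure_map
      ((continuous_const.add ((continuous_const.matrix_mulVec continuous_id))).measurable.aemeasurable)
  · infer_instance

/-- The random-walk transition kernel: `P(x, ·)` is the law of `x + ξ` with `ξ ∼ μ`. -/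
noncomputable def rwKernel {d : ℕ} (μ : Measure (Fin d → ℝ)) :
    Kernel (Fin d → ℝ) (Fin d → ℝ) :=
  Kernel.map (Kernel.id ×ₖ Kernel.const _ μ) (fun p => p.1 + p.2)

instance {d : ℕ} (μ : Measure (Fin d → ℝ)) [IsProbabilityMeasure μ] :
    IsMarkovKernel (rwKernel μ) :=
  Kernel.IsMarkovKernel.map _ (measurable_fst.add measurable_snd)


/-- The autoregressive (pCN-type) transition kernel: `P(x, ·)` is the law of
`a + b • (x − a) + ξ` with `ξ ∼ μ`. -/
noncomputable def arKernel {d : ℕ} (a : Fin d → ℝ) (b : ℝ) (μ : Measure (Fin d → ℝ)) :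
    Kernel (Fin d → ℝ) (Fin d → ℝ) :=
  Kernel.map (Kernel.id ×ₖ Kernel.const _ μ) (fun p => a + b • (p.1 - a) + p.2)

instance {d : ℕ} (a : Fin d → ℝ) (b : ℝ) (μ : Measure (Fin d → ℝ)) [IsProbabilityMeasure μ] :
    IsMarkovKernel (arKernel a b μ) :=
  Kernel.IsMarkovKernel.map _
    ((measurable_const.add ((measurable_fst.sub measurable_const).const_smul b)).add
      measurable_snd)

/-- The Metropolis–Hastings acceptance probability `α_P(x, x') := min{1, dν_P^⊤/dν_P (x, x')}`,
where `ν_P(dx dx') := P(x, dx') π(dx)` and `ν_P^⊤` is its swap. -/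
noncomputable def mhAccept {E : Type*} [MeasurableSpace E] (π : Measure E) (P : Kernel E E) :
    E × E → ℝ≥0∞ :=
  fun p => min 1 (((π ⊗ₘ P).map Prod.swap).rnDeriv (π ⊗ₘ P) p)

/-- The Metropolis–Hastings transition kernel with target `π` and proposal `P`:
`K(x, dx') = α_P(x, x') P(x, dx') + r(x) δ_x(dx')`. -/
noncomputable def mhKernel {E : Type*} [MeasurableSpace E] (π : Measure E) (P : Kernel E E)
    [IsSFiniteKernel P] : Kernel E E :=
  P.withDensity (fun x y => mhAccept π P (x, y)) +
    (Kernel.id).withDensity (fun x _ => ∫⁻ y, (1 - mhAccept π P (x, y)) ∂(P x))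

/-
The map `T x = xₙ + C^{1/2} x` pushes `N(0, I)` to `N(xₙ, C)` and conjugates the pCN
proposal for `N(0, I)` into the modified pCN proposal for `N(xₙ, C)`. The Metropolis–Hastings
construction is equivariant under any measurable isomorphism: pushing target and proposal
forward pushes the joint law `π ⊗ P` forward by `T × T`, Radon–Nikodym derivatives are
invariant under such a pushforward, so the acceptance probability, and with it the whole
kernel, is transported by `T`.
-/

section MetropolisHastings

variable {E F : Type*} [MeasurableSpace E] [MeasurableSpace F]

lemma measurable_mhAccept (π : Measure E) (P : Kernel E E) : Measurable (mhAccept π P) :=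
  measurable_const.min (Measure.measurable_rnDeriv _ _)

lemma mhKernel_apply (π : Measure E) (P : Kernel E E) [IsSFiniteKernel P] (x : E) :
    mhKernel π P x = (P x).withDensity (fun y => mhAccept π P (x, y)) +
      (∫⁻ y, (1 - mhAccept π P (x, y)) ∂(P x)) • Measure.dirac x := by
  have hα := measurable_mhAccept π P
  have hr : Measurable fun x => ∫⁻ y, (1 - mhAccept π P (x, y)) ∂(P x) :=
    (measurable_const.sub hα).lintegral_kernel_prod_right'
  rw [mhKernel, FunLike.coe_add, Pi.add_apply, Kernel.withDensity_apply _ (by exact hα),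
    Kernel.withDensity_apply _ (by exact hr.comp measurable_fst), Kernel.id_apply,
    withDensity_const]

lemma MeasurableEquiv.map_withDensity (e : E ≃ᵐ F) (μ : Measure E) {f : F → ℝ≥0∞}
    (hf : Measurable f) : (μ.map e).withDensity f = (μ.withDensity (f ∘ e)).map e := by
  ext s hs
  rw [Measure.map_apply e.measurable hs, withDensity_apply _ hs,
    withDensity_apply _ (e.measurable hs), setLIntegral_map hs hf e.measurable]
  rfl

variable (e : E ≃ᵐ F) (π : Measure E) (P : Kernel E E) (Q : Kernel F F)

lemma compProd_map_eq_map_prodCongr [SFinite π] [IsSFiniteKernel P] [IsSFiniteKernel Q]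
    (hQ : ∀ x, Q (e x) = (P x).map e) :
    π.map e ⊗ₘ Q = (π ⊗ₘ P).map (e.prodCongr e) := by
  ext s hs
  rw [Measure.compProd_apply hs, lintegral_map (Kernel.measurable_kernel_prodMk_left hs)
    e.measurable, Measure.map_apply (e.prodCongr e).measurable hs,
    Measure.compProd_apply ((e.prodCongr e).measurable hs)]
  refine lintegral_congr fun x => ?_
  rw [hQ x, Measure.map_apply e.measurable (measurable_prodMk_left hs)]
  rfl

lemma mhAccept_map_prodCongr [IsFiniteMeasure π] [IsFiniteKernel P] [IsSFiniteKernel Q]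
    (hQ : ∀ x, Q (e x) = (P x).map e) :
    ∀ᵐ p ∂(π ⊗ₘ P), mhAccept (π.map e) Q (e.prodCongr e p) = mhAccept π P p := by
  have hswap : ((π ⊗ₘ P).map (e.prodCongr e)).map Prod.swap
      = ((π ⊗ₘ P).map Prod.swap).map (e.prodCongr e) := by
    rw [Measure.map_map measurable_swap (e.prodCongr e).measurable,
      Measure.map_map (e.prodCongr e).measurable measurable_swap]
    rfl
  filter_upwards [(e.prodCongr e).measurableEmbedding.rnDeriv_map
    ((π ⊗ₘ P).map Prod.swap) (π ⊗ₘ P)] with p hp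
  rw [mhAccept, mhAccept, compProd_map_eq_map_prodCongr e π P Q hQ, hswap, hp]

theorem mhKernel_map_measurableEquiv [IsFiniteMeasure π] [IsFiniteKernel P] [IsSFiniteKernel Q]
    (hQ : ∀ x, Q (e x) = (P x).map e) :
    ∀ᵐ y ∂(π.map e), mhKernel (π.map e) Q y = (mhKernel π P (e.symm y)).map e := by
  rw [e.measurableEmbedding.ae_map_iff]
  filter_upwards [Measure.ae_ae_of_ae_compProd (mhAccept_map_prodCongr e π P Q hQ)] with x hx
  have hα : Measurable fun y => mhAccept (π.map e) Q (e x, y) :=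
    (measurable_mhAccept _ Q).comp measurable_prodMk_left
  have hacc : (Q (e x)).withDensity (fun y => mhAccept (π.map e) Q (e x, y))
      = ((P x).withDensity fun y => mhAccept π P (x, y)).map e := by
    rw [hQ x, e.map_withDensity (P x) hα]
    exact congrArg _ (withDensity_congr_ae hx)
  have hrej : ∫⁻ y, (1 - mhAccept (π.map e) Q (e x, y)) ∂(Q (e x))
      = ∫⁻ y, (1 - mhAccept π P (x, y)) ∂(P x) := by
    have hr : Measurable fun y => 1 - mhAccept (π.map e) Q (e x, y) := measurable_const.sub hα
    rw [hQ x, lintegral_map hr e.measurable]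
    exact lintegral_congr_ae (hx.mono fun y hy => congrArg (1 - ·) hy)
  rw [e.symm_apply_apply, mhKernel_apply, mhKernel_apply, Measure.map_add _ _ e.measurable,
    Measure.map_smul, Measure.map_dirac' e.measurable, hacc, hrej]

end MetropolisHastings

section MatrixSqrt

variable {n : Type*} [Fintype n] [DecidableEq n] {A : Matrix n n ℝ}

lemma Matrix.PosSemidef.sqrt_eq_cfc (hA : A.PosSemidef) : hA.sqrt = cfc Real.sqrt A := by
  rw [hA.1.cfc_eq]; rfl

lemma Matrix.PosSemidef.sqrt_sq (hA : A.PosSemidef) : hA.sqrt ^ 2 = A := by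
  rw [hA.sqrt_eq_cfc]
  refine (cfc_pow Real.sqrt 2 A (ha := hA.1)).symm.trans
    ((cfc_congr fun x hx => ?_).trans (cfc_id ℝ A hA.1))
  rw [hA.1.spectrum_real_eq_range_eigenvalues] at hx
  obtain ⟨i, rfl⟩ := hx
  exact Real.sq_sqrt (hA.eigenvalues_nonneg i)

lemma Matrix.PosSemidef.sqrt_one : (PosSemidef.one (n := n) (R := ℝ)).sqrt = 1 := by
  simp [PosSemidef.sqrt_eq_cfc]

lemma Matrix.PosSemidef.sqrt_smul (hA : A.PosSemidef) {c : ℝ} (hc : 0 ≤ c)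
    (hcA : (c • A).PosSemidef) : hcA.sqrt = √c • hA.sqrt := by
  rw [hcA.sqrt_eq_cfc, hA.sqrt_eq_cfc]
  refine (cfc_comp_smul c Real.sqrt A (ha := hA.1)).symm.trans
    ((cfc_congr fun x _ => ?_).trans (cfc_smul √c Real.sqrt A))
  rw [smul_eq_mul, smul_eq_mul, Real.sqrt_mul hc]

lemma Matrix.PosDef.isUnit_det_sqrt (hA : A.PosDef) : IsUnit hA.posSemidef.sqrt.det := by
  rw [← isUnit_iff_isUnit_det, ← isUnit_pow_iff two_ne_zero, hA.posSemidef.sqrt_sq]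
  exact hA.isUnit

end MatrixSqrt

noncomputable def Matrix.affineMeasurableEquiv {n : Type*} [Fintype n] [DecidableEq n]
    (m : n → ℝ) (S : Matrix n n ℝ) (hS : IsUnit S.det) : (n → ℝ) ≃ᵐ (n → ℝ) where
  toFun x := m + S *ᵥ x
  invFun y := S⁻¹ *ᵥ (y - m)
  left_inv x := by simp [mulVec_mulVec, nonsing_inv_mul S hS]
  right_inv y := by simp [mulVec_mulVec, mul_nonsing_inv S hS]
  measurable_toFun := by change Measurable fun x => m + S *ᵥ x; fun_prop
  measurable_invFun := by change Measurable fun y => S⁻¹ *ᵥ (y - m); fun_prop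

section Gaussian

variable {d : ℕ}

lemma gaussian_of_posSemidef (m : Fin d → ℝ) {C : Matrix (Fin d) (Fin d) ℝ}
    (hC : C.PosSemidef) : gaussian m C = (stdGaussian d).map (fun x => m + hC.sqrt *ᵥ x) :=
  dif_pos hC

lemma gaussian_zero_one : gaussian (0 : Fin d → ℝ) 1 = stdGaussian d := by
  simp [gaussian_of_posSemidef 0 PosSemidef.one, PosSemidef.sqrt_one]

lemma gaussian_zero_smul {C : Matrix (Fin d) (Fin d) ℝ} (hC : C.PosSemidef) {c : ℝ}
    (hc : 0 ≤ c) :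
    gaussian 0 (c • C) = (gaussian 0 (c • (1 : Matrix (Fin d) (Fin d) ℝ))).map (hC.sqrt *ᵥ ·) := by
  have hcC : (c • C).PosSemidef := hC.smul hc
  have hc1 : (c • (1 : Matrix (Fin d) (Fin d) ℝ)).PosSemidef := PosSemidef.one.smul hc
  rw [gaussian_of_posSemidef 0 hcC, gaussian_of_posSemidef 0 hc1,
    Measure.map_map (by fun_prop) (by fun_prop)]
  congr 1
  funext x
  simp [hC.sqrt_smul hc hcC, PosSemidef.one.sqrt_smul hc hc1, PosSemidef.sqrt_one,
    smul_mulVec, mulVec_smul]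

end Gaussian

section Autoregressive

variable {d : ℕ}

lemma arKernel_apply (a : Fin d → ℝ) (b : ℝ) (μ : Measure (Fin d → ℝ)) [SFinite μ]
    (x : Fin d → ℝ) : arKernel a b μ x = μ.map (fun ξ => a + b • (x - a) + ξ) := by
  have hm : Measurable fun p : (Fin d → ℝ) × (Fin d → ℝ) => a + b • (p.1 - a) + p.2 := by
    fun_prop
  rw [arKernel, Kernel.map_apply _ hm, Kernel.prod_apply, Kernel.id_apply, Kernel.const_apply,
    Measure.dirac_prod, Measure.map_map hm measurable_prodMk_left]
  rfl

lemma arKernel_affine (m : Fin d → ℝ) (S : Matrix (Fin d) (Fin d) ℝ) (b : ℝ)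
    (μ : Measure (Fin d → ℝ)) [SFinite μ] (x : Fin d → ℝ) :
    arKernel m b (μ.map (S *ᵥ ·)) (m + S *ᵥ x) = (arKernel 0 b μ x).map (m + S *ᵥ ·) := by
  rw [arKernel_apply, arKernel_apply, Measure.map_map (by fun_prop) (by fun_prop),
    Measure.map_map (by fun_prop) (by fun_prop)]
  congr 1
  funext ξ
  simp [mulVec_add, mulVec_smul, add_assoc]

end Autoregressive

theorem mhKernel_gaussian_pcn_pushforward_general
    {d : ℕ} (xn : Fin d → ℝ) (C : Matrix (Fin d) (Fin d) ℝ) (hC : C.PosDef)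
    (s : ℝ) :
    ∀ᵐ y ∂(gaussian xn C),
      mhKernel (gaussian xn C)
          (arKernel xn (Real.sqrt (1 - s ^ 2)) (gaussian 0 (s ^ 2 • C))) y
        = (mhKernel (gaussian 0 1)
              (arKernel 0 (Real.sqrt (1 - s ^ 2))
                (gaussian 0 (s ^ 2 • (1 : Matrix (Fin d) (Fin d) ℝ))))
            ((hC.posSemidef.sqrt)⁻¹ *ᵥ (y - xn))).map
            (fun x => xn + hC.posSemidef.sqrt *ᵥ x) := by
  let T := affineMeasurableEquiv xn hC.posSemidef.sqrt hC.isUnit_det_sqrt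
  have hπ : gaussian xn C = (gaussian 0 1).map T := by
    rw [gaussian_zero_one]; exact gaussian_of_posSemidef xn hC.posSemidef
  rw [hπ]
  refine mhKernel_map_measurableEquiv T _ _ _ fun x => ?_
  rw [gaussian_zero_smul hC.posSemidef (sq_nonneg s)]
  exact arKernel_affine xn _ _ _ x

/-- For the Gaussian target `π_n = N(x_n, C_n)` and the modified preconditioned
Crank–Nicolson proposal `P_n(x) = N(x_n + √(1−s²)(x − x_n), s²C_n)`, the `π_n`-reversible MH
kernel `K_n` is the pushforward `(T_n)_*K` of the MH kernel `K` targeting `N(0, I_d)` with pCN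
proposal `N(√(1−s²)x, s²I_d)` under the bijection `T_n(x) = x_n + C_n^{1/2} x`, i.e. (a.e.)
`K_n(y, ·) = K(T_n⁻¹ y, T_n⁻¹ ·)`. -/
theorem mhKernel_gaussian_pcn_pushforward
    {d : ℕ} (xn : Fin d → ℝ) (C : Matrix (Fin d) (Fin d) ℝ) (hC : C.PosDef)
    (s : ℝ) (hs : 0 < s) (hs1 : s ≤ 1) :
    ∀ᵐ y ∂(gaussian xn C),
      mhKernel (gaussian xn C)
          (arKernel xn (Real.sqrt (1 - s ^ 2)) (gaussian 0 (s ^ 2 • C))) y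
        = (mhKernel (gaussian 0 1)
              (arKernel 0 (Real.sqrt (1 - s ^ 2))
                (gaussian 0 (s ^ 2 • (1 : Matrix (Fin d) (Fin d) ℝ))))
            ((hC.posSemidef.sqrt)⁻¹ *ᵥ (y - xn))).map
            (fun x => xn + hC.posSemidef.sqrt *ᵥ x) :=
  mhKernel_gaussian_pcn_pushforward_general xn C hC s
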